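/- Let R_0, R_1 ⊆ {0,1}^r be Boolean relations such that R_1 is monotone and non-empty and R_0 is not a subset of R_1. Then the relation R_0 + R_1 3-simulates equality. -/

import Mathlib

/-!
Choose `c ∈ R₀ \ R₁` maximal and `b ∈ R₀ ∪ R₁` minimal strictly above `c`. Since `R₁` is
monotone and non-empty it contains the all-ones tuple, so `b` exists, and maximality of `c` puts
`b` in `R₁`; no tuple strictly between `c` and `b` lies in `R₀ ∪ R₁`. Fix `i₀` with `c i₀ = 0`
and `b i₀ = 1`, and chain `k` copies of `R₀ + R₁` cyclically: copy `j` has head `x_j`, its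
`i₀`-th tail coordinate is `x_(j+1)`, and the tail coordinates where `c` and `b` agree are
pinned. Every tail then lies in `[c, b] ∩ (R₀ ∪ R₁) = {c, b}`. A head `1` forces the tail into
`R₁`, i.e. to be `b`, so the next head is `1` as well; going around the cycle, either all heads
are `0` and all tails `c`, or all heads are `1` and all tails `b`. This gives exactly one
solution in each class, and every variable occurs at most twice.
-/

/-- A Boolean relation of arity `r`: a set of bit-tuples of length `r`. -/
abbrev BoolRel (r : ℕ) := Set (Fin r → Bool)

/-- The unary constant relation `{0}`. -/
def Rzero : BoolRel 1 := {a | a 0 = false}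

/-- The unary constant relation `{1}`. -/
def Rone : BoolRel 1 := {a | a 0 = true}

/-- A constraint over a variable set `V`: a Boolean relation together with a scope. -/
structure Constraint (V : Type) where
  arity : ℕ
  rel : BoolRel arity
  scope : Fin arity → V

/-- An assignment satisfies a constraint if the scoped tuple lies in the relation. -/
def Constraint.sat {V : Type} (c : Constraint V) (σ : V → Bool) : Prop :=
  (fun i => σ (c.scope i)) ∈ c.rel

/-- A CSP instance: a collection of constraints over a variable set `V`. -/
structure CSPInstance (V : Type) where
  constraints : List (Constraint V)

/-- An assignment satisfies an instance if it satisfies every constraint. -/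
def CSPInstance.sat {V : Type} (I : CSPInstance V) (σ : V → Bool) : Prop :=
  ∀ c ∈ I.constraints, c.sat σ

/-- An instance is over the constraint language `Γ` if every constraint uses a relation of `Γ`. -/
def CSPInstance.over {V : Type} (I : CSPInstance V) (Γ : Set (Σ r, BoolRel r)) : Prop :=
  ∀ c ∈ I.constraints, (⟨c.arity, c.rel⟩ : Σ r, BoolRel r) ∈ Γ

/-- The degree of a variable: the number of occurrences among the scopes of the constraints. -/
def varDegree {V : Type} [DecidableEq V] (I : CSPInstance V) (v : V) : ℕ :=
  (I.constraints.map fun c => (Finset.univ.filter fun i => c.scope i = v).card).sum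

/-- The language `{R_zero, R_one}` of pins. -/
def pinLang : Set (Σ r, BoolRel r) := {⟨1, Rzero⟩, ⟨1, Rone⟩}

/-- `Γ` `d`-simulates the `k`-ary equality relation. -/
def simulatesEqK (Γ : Set (Σ r, BoolRel r)) (d k : ℕ) : Prop :=
  ∃ (ℓ : ℕ), k ≤ ℓ ∧ ∃ I : CSPInstance (Fin ℓ),
    I.over (Γ ∪ pinLang) ∧
    (∀ v : Fin ℓ, varDegree I v ≤ d) ∧
    (∀ v : Fin ℓ, (v : ℕ) < k → varDegree I v ≤ d - 1) ∧
    ∃ m : ℕ, 1 ≤ m ∧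
      Nat.card {σ : Fin ℓ → Bool | I.sat σ ∧ ∀ v : Fin ℓ, (v : ℕ) < k → σ v = false} = m ∧
      Nat.card {σ : Fin ℓ → Bool | I.sat σ ∧ ∀ v : Fin ℓ, (v : ℕ) < k → σ v = true} = m ∧
      (∀ σ : Fin ℓ → Bool, I.sat σ →
        (∀ v : Fin ℓ, (v : ℕ) < k → σ v = false) ∨ (∀ v : Fin ℓ, (v : ℕ) < k → σ v = true))

/-- `Γ` `d`-simulates equality: it `d`-simulates `Eq_k` for every `k ≥ 2`. -/
def simulatesEq (Γ : Set (Σ r, BoolRel r)) (d : ℕ) : Prop :=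
  ∀ k : ℕ, 2 ≤ k → simulatesEqK Γ d k

/-- A single relation `d`-simulates equality if the language `{R}` does. -/
def relSimulatesEq {r : ℕ} (R : BoolRel r) (d : ℕ) : Prop :=
  simulatesEq {⟨r, R⟩} d

/-- OR-conj relations: definable by a conjunction of pins and ORs (of any arity ≥ 1). -/
def ORConj {r : ℕ} (R : BoolRel r) : Prop :=
  ∃ (P : Set (Fin r × Bool)) (Cl : Set (Set (Fin r))),
    (∀ C ∈ Cl, C.Nonempty) ∧
    ∀ a : Fin r → Bool, a ∈ R ↔
      ((∀ p ∈ P, a p.1 = p.2) ∧ (∀ C ∈ Cl, ∃ i ∈ C, a i = true))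

/-- NAND-conj relations: definable by a conjunction of pins and NANDs (of any arity ≥ 1). -/
def NANDConj {r : ℕ} (R : BoolRel r) : Prop :=
  ∃ (P : Set (Fin r × Bool)) (Cl : Set (Set (Fin r))),
    (∀ C ∈ Cl, C.Nonempty) ∧
    ∀ a : Fin r → Bool, a ∈ R ↔
      ((∀ p ∈ P, a p.1 = p.2) ∧ (∀ C ∈ Cl, ∃ i ∈ C, a i = false))

/-- One step of ppp-definability: permutation of columns, pinning, or projection. -/
inductive pppStep : (Σ r, BoolRel r) → (Σ r, BoolRel r) → Prop
  | perm {r : ℕ} (R : BoolRel r) (π : Equiv.Perm (Fin r)) :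
      pppStep ⟨r, R⟩ ⟨r, {a | (fun i => a (π i)) ∈ R}⟩
  | pin {r : ℕ} (R : BoolRel r) (i : Fin r) (c : Bool) :
      pppStep ⟨r, R⟩ ⟨r, {a | a ∈ R ∧ a i = c}⟩
  | proj {r : ℕ} (R : BoolRel (r + 1)) (i : Fin (r + 1)) :
      pppStep ⟨r + 1, R⟩ ⟨r, {a | ∃ b ∈ R, a = fun j => b (i.succAbove j)}⟩

/-- `R ≤ppp R'`: `R` is obtained from `R'` by a sequence of ppp operations. -/
def pppLE {r r' : ℕ} (R : BoolRel r) (R' : BoolRel r') : Prop :=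
  Relation.ReflTransGen pppStep ⟨r', R'⟩ ⟨r, R⟩

def Req : BoolRel 2 := {a | a 0 = a 1}
def Rneq : BoolRel 2 := {a | a 0 ≠ a 1}
def Rimp : BoolRel 2 := {a | a 0 = true → a 1 = true}
def ROR : BoolRel 2 := {a | a 0 = true ∨ a 1 = true}
def RNAND : BoolRel 2 := {a | a 0 = false ∨ a 1 = false}
def ORk (k : ℕ) : BoolRel k := {a | ∃ i, a i = true}
def NANDk (k : ℕ) : BoolRel k := {a | ∃ i, a i = false}

/-- `R₀ + R₁ = {0a : a ∈ R₀} ∪ {1a : a ∈ R₁}`. -/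
def relSum {r : ℕ} (R0 R1 : BoolRel r) : BoolRel (r + 1) :=
  {a | (a 0 = false ∧ (fun i => a i.succ) ∈ R0) ∨ (a 0 = true ∧ (fun i => a i.succ) ∈ R1)}

/-- Column `i` of `R` is constant. -/
def constCol {r : ℕ} (R : BoolRel r) (i : Fin r) : Prop :=
  ∀ a ∈ R, ∀ b ∈ R, a i = b i


/-- Affine relations: solution sets of systems of linear equations over GF(2). -/
def AffineRel {r : ℕ} (R : BoolRel r) : Prop :=
  ∃ E : Set (Finset (Fin r) × Bool),
    ∀ a : Fin r → Bool, a ∈ R ↔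
      ∀ e ∈ E, (∑ i ∈ e.1, (if a i then (1 : ZMod 2) else 0)) = (if e.2 then (1 : ZMod 2) else 0)

/-- IM-conj relations: definable by a conjunction of pins and binary implications. -/
def IMConj {r : ℕ} (R : BoolRel r) : Prop :=
  ∃ (P : Set (Fin r × Bool)) (Imp : Set (Fin r × Fin r)),
    ∀ a : Fin r → Bool, a ∈ R ↔
      ((∀ p ∈ P, a p.1 = p.2) ∧ (∀ q ∈ Imp, a q.1 = true → a q.2 = true))

/-- Pointwise order on bit-tuples. -/
def leTuple {r : ℕ} (a b : Fin r → Bool) : Prop := ∀ i, a i = true → b i = true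

/-- A relation is monotone if it is upward closed. -/
def MonotoneRel {r : ℕ} (R : BoolRel r) : Prop := ∀ a ∈ R, ∀ b, leTuple a b → b ∈ R

/-- A relation is antitone if it is downward closed. -/
def AntitoneRel {r : ℕ} (R : BoolRel r) : Prop := ∀ a ∈ R, ∀ b, leTuple b a → b ∈ R

/-- Pseudo-monotone: the restriction to non-constant columns is monotone. -/
def PseudoMonotone {r : ℕ} (R : BoolRel r) : Prop :=
  ∀ a ∈ R, ∀ b : Fin r → Bool,
    (∀ i, constCol R i → b i = a i) →
    (∀ i, ¬ constCol R i → a i = true → b i = true) → b ∈ R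

/-- Pseudo-antitone: the restriction to non-constant columns is antitone. -/
def PseudoAntitone {r : ℕ} (R : BoolRel r) : Prop :=
  ∀ a ∈ R, ∀ b : Fin r → Bool,
    (∀ i, constCol R i → b i = a i) →
    (∀ i, ¬ constCol R i → b i = true → a i = true) → b ∈ R

/-- Bit-wise complement of a relation. -/
def bwcomp {r : ℕ} (R : BoolRel r) : BoolRel r := {a | (fun i => !(a i)) ∈ R}

/-- `(P, Cl)` is a normalized OR-conj formula defining `R`: pins `P`, OR-clauses `Cl`
(distinct arguments, size ≥ 2, no pinned variable in a clause, antichain of clauses). -/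
def NormalizedOR {r : ℕ} (R : BoolRel r) (P : Set (Fin r × Bool))
    (Cl : Set (Finset (Fin r))) : Prop :=
  (∀ a : Fin r → Bool, a ∈ R ↔
      ((∀ p ∈ P, a p.1 = p.2) ∧ (∀ C ∈ Cl, ∃ i ∈ C, a i = true))) ∧
  (∀ p ∈ P, ∀ C ∈ Cl, p.1 ∉ C) ∧
  (∀ C ∈ Cl, 2 ≤ C.card) ∧
  (∀ C ∈ Cl, ∀ C' ∈ Cl, C ⊆ C' → C = C')

/-- `(P, Cl)` is a normalized NAND-conj formula defining `R`. -/
def NormalizedNAND {r : ℕ} (R : BoolRel r) (P : Set (Fin r × Bool))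
    (Cl : Set (Finset (Fin r))) : Prop :=
  (∀ a : Fin r → Bool, a ∈ R ↔
      ((∀ p ∈ P, a p.1 = p.2) ∧ (∀ C ∈ Cl, ∃ i ∈ C, a i = false))) ∧
  (∀ p ∈ P, ∀ C ∈ Cl, p.1 ∉ C) ∧
  (∀ C ∈ Cl, 2 ≤ C.card) ∧
  (∀ C ∈ Cl, ∀ C' ∈ Cl, C ⊆ C' → C = C')

section Instances

variable {V W : Type}

namespace CSPInstance

def map (f : V → W) (I : CSPInstance V) : CSPInstance W :=
  ⟨I.constraints.map fun c => ⟨c.arity, c.rel, f ∘ c.scope⟩⟩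

instance : Append (CSPInstance V) := ⟨fun I J => ⟨I.constraints ++ J.constraints⟩⟩

@[simp]
theorem constraints_append (I J : CSPInstance V) :
    (I ++ J).constraints = I.constraints ++ J.constraints := rfl

theorem sat_map (f : V → W) (I : CSPInstance V) (σ : W → Bool) :
    (I.map f).sat σ ↔ I.sat (σ ∘ f) := by
  simp [map, sat, Constraint.sat]

theorem over_map (f : V → W) (I : CSPInstance V) (Γ : Set (Σ r, BoolRel r)) :
    (I.map f).over Γ ↔ I.over Γ := by
  simp [map, CSPInstance.over]

theorem sat_append (I J : CSPInstance V) (σ : V → Bool) :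
    (I ++ J).sat σ ↔ I.sat σ ∧ J.sat σ := by
  simp only [sat, constraints_append, List.mem_append]
  grind

theorem over_append (I J : CSPInstance V) (Γ : Set (Σ r, BoolRel r)) :
    (I ++ J).over Γ ↔ I.over Γ ∧ J.over Γ := by
  simp only [CSPInstance.over, constraints_append, List.mem_append]
  grind

theorem over_mono {I : CSPInstance V} {Γ Δ : Set (Σ r, BoolRel r)} (hΓΔ : Γ ⊆ Δ)
    (hI : I.over Γ) : I.over Δ :=
  fun c hc => hΓΔ (hI c hc)

end CSPInstance

theorem varDegree_map [DecidableEq V] [DecidableEq W] {f : V → W} (hf : f.Injective)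
    (I : CSPInstance V) (v : V) : varDegree (I.map f) (f v) = varDegree I v := by
  simp [varDegree, CSPInstance.map, Function.comp_def, hf.eq_iff]

theorem varDegree_append [DecidableEq V] (I J : CSPInstance V) (v : V) :
    varDegree (I ++ J) v = varDegree I v + varDegree J v := by
  simp [varDegree]

end Instances

section Pins

variable {V : Type}

def pinConstraint (val : Bool) (w : V) : Constraint V :=
  ⟨1, if val then Rone else Rzero, fun _ => w⟩

noncomputable def pinInstance (S : Finset V) (τ : V → Bool) : CSPInstance V :=
  ⟨S.toList.map fun w => pinConstraint (τ w) w⟩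

theorem sat_pinInstance (S : Finset V) (τ σ : V → Bool) :
    (pinInstance S τ).sat σ ↔ ∀ w ∈ S, σ w = τ w := by
  have hpin : ∀ val w, (pinConstraint val w).sat σ ↔ σ w = val := by
    intro val w
    cases val <;> exact Iff.rfl
  simp [pinInstance, CSPInstance.sat, hpin]

theorem over_pinInstance (S : Finset V) (τ : V → Bool) : (pinInstance S τ).over pinLang := by
  simp only [CSPInstance.over, pinInstance, List.mem_map, forall_exists_index, and_imp,
    forall_apply_eq_imp_iff₂]
  intro w _
  cases τ w <;> simp [pinConstraint, pinLang]

theorem varDegree_pinInstance [DecidableEq V] (S : Finset V) (τ : V → Bool) (v : V) :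
    varDegree (pinInstance S τ) v = if v ∈ S then 1 else 0 := by
  simp [varDegree, pinInstance, pinConstraint, Function.comp_def, Finset.sum_map_toList,
    apply_ite Finset.card]

end Pins

theorem simulatesEqK_of_sat_iff_fin {Γ : Set (Σ r, BoolRel r)} {d k ℓ : ℕ} (hkℓ : k ≤ ℓ)
    (hk : 0 < k) (I : CSPInstance (Fin ℓ)) (hI : I.over (Γ ∪ pinLang))
    (hdeg : ∀ v, varDegree I v ≤ d) (hdeg_lt : ∀ v : Fin ℓ, (v : ℕ) < k → varDegree I v ≤ d - 1)
    {τ₀ τ₁ : Fin ℓ → Bool} (hτ₀ : ∀ v : Fin ℓ, (v : ℕ) < k → τ₀ v = false)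
    (hτ₁ : ∀ v : Fin ℓ, (v : ℕ) < k → τ₁ v = true) (hsat : ∀ σ, I.sat σ ↔ σ = τ₀ ∨ σ = τ₁) :
    simulatesEqK Γ d k := by
  have hclass (x : Bool) (τ τ' : Fin ℓ → Bool) (hτ : ∀ v : Fin ℓ, (v : ℕ) < k → τ v = x)
      (hτ' : ∀ v : Fin ℓ, (v : ℕ) < k → τ' v = !x) (hsat' : ∀ σ, I.sat σ ↔ σ = τ ∨ σ = τ') :
      Nat.card {σ | I.sat σ ∧ ∀ v : Fin ℓ, (v : ℕ) < k → σ v = x} = 1 := by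
    have hsingleton : {σ | I.sat σ ∧ ∀ v : Fin ℓ, (v : ℕ) < k → σ v = x} = {τ} := by
      ext σ
      simp only [Set.mem_ofPred_eq, Set.mem_singleton_iff, hsat']
      constructor
      · rintro ⟨rfl | rfl, hx⟩
        · rfl
        · have h0 := hx ⟨0, hk.trans_le hkℓ⟩ hk
          rw [hτ' _ hk] at h0
          exact absurd h0 (Bool.not_ne_self x)
      · rintro rfl
        exact ⟨.inl rfl, hτ⟩
    rw [hsingleton, Nat.card_unique]
  refine ⟨ℓ, hkℓ, I, hI, hdeg, hdeg_lt, 1, le_rfl, hclass false τ₀ τ₁ hτ₀ hτ₁ hsat,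
    hclass true τ₁ τ₀ hτ₁ hτ₀ (fun σ => (hsat σ).trans or_comm), fun σ hσ => ?_⟩
  rcases (hsat σ).1 hσ with rfl | rfl
  exacts [.inl hτ₀, .inr hτ₁]

theorem simulatesEqK_of_sat_iff {Γ : Set (Σ r, BoolRel r)} {d k : ℕ} [NeZero k]
    {W : Type} [Fintype W] [DecidableEq W] (I : CSPInstance (Fin k ⊕ W))
    (hI : I.over (Γ ∪ pinLang)) (hdeg : ∀ v, varDegree I v ≤ d)
    (hdeg_inl : ∀ j, varDegree I (Sum.inl j) ≤ d - 1) {σ₀ σ₁ : Fin k ⊕ W → Bool}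
    (hσ₀ : ∀ j, σ₀ (Sum.inl j) = false) (hσ₁ : ∀ j, σ₁ (Sum.inl j) = true)
    (hsat : ∀ σ, I.sat σ ↔ σ = σ₀ ∨ σ = σ₁) :
    simulatesEqK Γ d k := by
  let e : Fin k ⊕ W ≃ Fin (k + Fintype.card W) :=
    (Equiv.sumCongr (Equiv.refl _) (Fintype.equivFin W)).trans finSumFinEquiv
  have he_lt (v : Fin (k + Fintype.card W)) (hv : (v : ℕ) < k) : e.symm v = Sum.inl ⟨v, hv⟩ :=
    e.symm_apply_eq.2 rfl
  have hdeg_e (v : Fin (k + Fintype.card W)) : varDegree (I.map e) v = varDegree I (e.symm v) := by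
    rw [← varDegree_map e.injective, e.apply_symm_apply]
  refine simulatesEqK_of_sat_iff_fin (Nat.le_add_right _ _) (Nat.pos_of_neZero k) (I.map e)
    ((CSPInstance.over_map _ _ _).2 hI) (fun v => (hdeg_e v).trans_le (hdeg _))
    (fun v hv => by rw [hdeg_e, he_lt v hv]; exact hdeg_inl _) (τ₀ := σ₀ ∘ e.symm)
    (τ₁ := σ₁ ∘ e.symm) (fun v hv => by simp [he_lt v hv, hσ₀])
    (fun v hv => by simp [he_lt v hv, hσ₁]) fun σ => ?_
  rw [CSPInstance.sat_map, hsat, Equiv.eq_comp_symm, Equiv.eq_comp_symm]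

section Gap

variable {r : ℕ}

theorem leTuple_iff_le {a b : Fin r → Bool} : leTuple a b ↔ a ≤ b :=
  forall_congr' fun _ => Bool.le_iff_imp.symm

theorem le_and_le_iff_forall_eq {c b t : Fin r → Bool} (hcb : c ≤ b) :
    c ≤ t ∧ t ≤ b ↔ ∀ i, c i = b i → t i = c i := by
  simp only [Pi.le_def, ← forall_and]
  have key : ∀ x y z : Bool, x ≤ y → (x ≤ z ∧ z ≤ y ↔ (x = y → z = x)) := by decide
  exact forall_congr' fun i => key _ _ _ (hcb i)

structure IsGap (R0 R1 : BoolRel r) (c b : Fin r → Bool) : Prop where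
  left_mem : c ∈ R0
  left_not_mem : c ∉ R1
  right_mem : b ∈ R1
  le : c ≤ b
  eq_or_eq : ∀ t, c ≤ t → t ≤ b → t ∈ R0 ∪ R1 → t = c ∨ t = b

theorem IsGap.exists_lt {R0 R1 : BoolRel r} {c b : Fin r → Bool} (h : IsGap R0 R1 c b) :
    ∃ i, c i = false ∧ b i = true := by
  have hlt : c < b := h.le.lt_of_ne fun hcb => h.left_not_mem (hcb ▸ h.right_mem)
  obtain ⟨i, hi⟩ := Pi.lt_def.1 hlt |>.2
  exact ⟨i, Bool.lt_iff.1 hi⟩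

theorem exists_isGap {R0 R1 : BoolRel r} (hmono : MonotoneRel R1) (hne : R1.Nonempty)
    (hnsub : ¬ R0 ⊆ R1) : ∃ c b, IsGap R0 R1 c b := by
  obtain ⟨c, hc⟩ := (Set.toFinite (R0 \ R1)).exists_maximal (Set.sdiff_nonempty.2 hnsub)
  have htop : ⊤ ∈ R1 := by
    obtain ⟨a, ha⟩ := hne
    exact hmono a ha ⊤ (leTuple_iff_le.2 le_top)
  obtain ⟨b, hb⟩ := (Set.toFinite {t | c < t ∧ t ∈ R0 ∪ R1}).exists_minimal
    ⟨⊤, lt_top_iff_ne_top.2 fun h => hc.1.2 (h ▸ htop), Or.inr htop⟩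
  have hb_mem : b ∈ R1 := by
    by_contra hb1
    obtain ⟨hcb, hb0 | hb1'⟩ := hb.1
    · exact hcb.not_ge (hc.2 ⟨hb0, hb1⟩ hcb.le)
    · exact hb1 hb1'
  refine ⟨c, b, hc.1.1, hc.1.2, hb_mem, hb.1.1.le, fun t hct htb ht => ?_⟩
  rcases hct.eq_or_lt with h | h
  · exact .inl h.symm
  · exact .inr (le_antisymm htb (hb.2 ⟨h, ht⟩ htb))

end Gap

open Finset

theorem Fin.card_filter_cons_eq {V : Type} [DecidableEq V] {n : ℕ} (x : V) (t : Fin n → V) (v : V) :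
    #{s | (Fin.cons x t : Fin (n + 1) → V) s = v} = (if x = v then 1 else 0) + #{i | t i = v} :=
  Fin.card_filter_univ_succ' _

theorem Fin.forall_of_imp_add_one {k : ℕ} [NeZero k] {P : Fin k → Prop}
    (h : ∀ j, P j → P (j + 1)) {j₀ : Fin k} (hj₀ : P j₀) (j : Fin k) : P j := by
  obtain ⟨n, rfl⟩ := Nat.exists_eq_succ_of_ne_zero (NeZero.ne k)
  have key : ∀ m : Fin (n + 1), P (j₀ + m) :=
    Fin.induction (by simpa using hj₀) fun i ih => by
      rw [← Fin.coeSucc_eq_succ, ← add_assoc]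
      exact h _ ih
  simpa using key (j - j₀)

section Chain

variable {r : ℕ} (R0 R1 : BoolRel r) (k : ℕ) [NeZero k] (i0 : Fin r)

/-- `inl j` is the head `x_j` of the `j`-th copy of `R0 + R1`, and `inr (j, i)` its own `i`-th
tail variable (coordinate `i0` of the tail is `x_(j+1)` instead). -/
abbrev ChainVar := Fin k ⊕ (Fin k × {i : Fin r // i ≠ i0})

def tailVar (j : Fin k) (i : Fin r) : ChainVar k i0 :=
  if h : i = i0 then .inl (j + 1) else .inr (j, ⟨i, h⟩)

def chainConstraint (j : Fin k) : Constraint (ChainVar k i0) :=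
  ⟨r + 1, relSum R0 R1, Fin.cons (.inl j) (tailVar k i0 j)⟩

def chainInstance : CSPInstance (ChainVar k i0) :=
  ⟨List.ofFn (chainConstraint R0 R1 k i0)⟩

def chainAssignment (a : Fin r → Bool) : ChainVar k i0 → Bool :=
  Sum.elim (fun _ => a i0) (fun p => a p.2)

variable {k i0}

theorem tailVar_i0 (j : Fin k) : tailVar k i0 j i0 = .inl (j + 1) := by
  simp [tailVar]

theorem sat_chainConstraint (j : Fin k) (σ : ChainVar k i0 → Bool) :
    (chainConstraint R0 R1 k i0 j).sat σ ↔
      (σ (.inl j) = false ∧ σ ∘ tailVar k i0 j ∈ R0) ∨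
        (σ (.inl j) = true ∧ σ ∘ tailVar k i0 j ∈ R1) :=
  Iff.rfl

theorem sat_chainInstance (σ : ChainVar k i0 → Bool) :
    (chainInstance R0 R1 k i0).sat σ ↔ ∀ j, (chainConstraint R0 R1 k i0 j).sat σ := by
  simp [chainInstance, CSPInstance.sat]

theorem over_chainInstance : (chainInstance R0 R1 k i0).over {⟨r + 1, relSum R0 R1⟩} := by
  simp [chainInstance, CSPInstance.over, chainConstraint]

theorem card_tailVar_eq_inl (j j' : Fin k) :
    #{i | tailVar k i0 j i = .inl j'} = if j + 1 = j' then 1 else 0 := by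
  have key : ∀ i, tailVar k i0 j i = .inl j' ↔ i = i0 ∧ j + 1 = j' := by
    intro i
    by_cases hi : i = i0 <;> simp [tailVar, hi]
  simp_rw [key]
  split_ifs <;> simp [*, Finset.filter_eq']

theorem card_tailVar_eq_inr (j : Fin k) (p : Fin k × {i : Fin r // i ≠ i0}) :
    #{i | tailVar k i0 j i = .inr p} = if j = p.1 then 1 else 0 := by
  have key : ∀ i, tailVar k i0 j i = .inr p ↔ i = p.2 ∧ j = p.1 := by
    intro i
    obtain ⟨j', i', hi'⟩ := p
    by_cases hi : i = i0
    · subst hi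
      simp [tailVar, hi'.symm]
    · simp [tailVar, hi, Subtype.ext_iff, and_comm]
  simp_rw [key]
  split_ifs <;> simp [*, Finset.filter_eq']

theorem varDegree_chainInstance (v : ChainVar k i0) :
    varDegree (chainInstance R0 R1 k i0) v =
      ∑ j, ((if .inl j = v then 1 else 0) + #{i | tailVar k i0 j i = v}) := by
  simp only [varDegree, chainInstance, List.map_ofFn, List.sum_ofFn, Function.comp_def]
  exact Finset.sum_congr rfl fun j _ => Fin.card_filter_cons_eq _ _ v

theorem varDegree_chainInstance_inl (j : Fin k) :
    varDegree (chainInstance R0 R1 k i0) (.inl j) = 2 := by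
  simp [varDegree_chainInstance, card_tailVar_eq_inl, sum_add_distrib, ← eq_sub_iff_add_eq]

theorem varDegree_chainInstance_inr (p : Fin k × {i : Fin r // i ≠ i0}) :
    varDegree (chainInstance R0 R1 k i0) (.inr p) = 1 := by
  simp [varDegree_chainInstance, card_tailVar_eq_inr]

theorem chainAssignment_comp_tailVar (a : Fin r → Bool) (j : Fin k) :
    chainAssignment k i0 a ∘ tailVar k i0 j = a := by
  funext i
  by_cases hi : i = i0
  · subst hi
    simp [tailVar, chainAssignment]
  · simp [tailVar, chainAssignment, hi]

theorem eq_chainAssignment_of_forall_comp_tailVar {a : Fin r → Bool} {σ : ChainVar k i0 → Bool}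
    (h : ∀ j, σ ∘ tailVar k i0 j = a) : σ = chainAssignment k i0 a := by
  funext v
  rcases v with j | ⟨j, i, hi⟩
  · simpa [tailVar_i0, chainAssignment] using congrFun (h (j - 1)) i0
  · simpa [tailVar, hi, chainAssignment] using congrFun (h j) i

end Chain

section Gadget

variable {r : ℕ} (R0 R1 : BoolRel r) (k : ℕ) [NeZero k] (i0 : Fin r) (c b : Fin r → Bool)

noncomputable def gapGadget : CSPInstance (ChainVar k i0) :=
  chainInstance R0 R1 k i0 ++
    pinInstance ((univ.filter fun p : Fin k × {i : Fin r // i ≠ i0} => c p.2 = b p.2).map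
      Function.Embedding.inr)
      (chainAssignment k i0 c)

theorem over_gapGadget :
    (gapGadget R0 R1 k i0 c b).over ({⟨r + 1, relSum R0 R1⟩} ∪ pinLang) :=
  (CSPInstance.over_append _ _ _).2
    ⟨CSPInstance.over_mono Set.subset_union_left (over_chainInstance R0 R1),
      CSPInstance.over_mono Set.subset_union_right (over_pinInstance _ _)⟩

theorem varDegree_gapGadget_le (v : ChainVar k i0) :
    varDegree (gapGadget R0 R1 k i0 c b) v ≤ 2 := by
  rw [gapGadget, varDegree_append, varDegree_pinInstance]
  rcases v with j | p
  · simp [varDegree_chainInstance_inl]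
  · rw [varDegree_chainInstance_inr]
    split_ifs <;> norm_num

variable {R0 R1 k i0 c b}

theorem comp_tailVar_mem_Icc {σ : ChainVar k i0 → Bool} (hσ : (gapGadget R0 R1 k i0 c b).sat σ)
    (hcb : c ≤ b) (hc : c i0 = false) (hb : b i0 = true) (j : Fin k) :
    c ≤ σ ∘ tailVar k i0 j ∧ σ ∘ tailVar k i0 j ≤ b := by
  have hpins := (sat_pinInstance _ _ _).1 ((CSPInstance.sat_append _ _ _).1 hσ).2
  rw [le_and_le_iff_forall_eq hcb]
  intro i hi
  by_cases hi0 : i = i0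
  · subst hi0
    simp [hc, hb] at hi
  · simpa [tailVar, hi0, chainAssignment] using hpins (.inr (j, ⟨i, hi0⟩)) (by simpa using hi)

theorem eq_chainAssignment_of_sat_gapGadget (hg : IsGap R0 R1 c b) (hc : c i0 = false)
    (hb : b i0 = true) {σ : ChainVar k i0 → Bool} (hσ : (gapGadget R0 R1 k i0 c b).sat σ) :
    σ = chainAssignment k i0 c ∨ σ = chainAssignment k i0 b := by
  have hchain := (sat_chainInstance R0 R1 σ).1 ((CSPInstance.sat_append _ _ _).1 hσ).1
  have htail (j : Fin k) : σ ∘ tailVar k i0 j = c ∨ σ ∘ tailVar k i0 j = b := by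
    obtain ⟨hct, htb⟩ := comp_tailVar_mem_Icc hσ hg.le hc hb j
    refine hg.eq_or_eq _ hct htb ?_
    rcases (sat_chainConstraint R0 R1 j σ).1 (hchain j) with ⟨-, h⟩ | ⟨-, h⟩
    exacts [.inl h, .inr h]
  have htail_i0 (j : Fin k) : (σ ∘ tailVar k i0 j) i0 = σ (.inl (j + 1)) := by
    simp [tailVar_i0]
  have hstep (j : Fin k) (hj : σ (.inl j) = true) : σ (.inl (j + 1)) = true := by
    rcases (sat_chainConstraint R0 R1 j σ).1 (hchain j) with ⟨hj', -⟩ | ⟨-, h1⟩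
    · simp [hj] at hj'
    rcases htail j with h | h
    · exact absurd (h ▸ h1) hg.left_not_mem
    · rw [← htail_i0, h, hb]
  by_cases hsome : ∃ j, σ (.inl j) = true
  · obtain ⟨j₀, hj₀⟩ := hsome
    refine .inr (eq_chainAssignment_of_forall_comp_tailVar fun j => ?_)
    refine (htail j).resolve_left fun h => ?_
    have := Fin.forall_of_imp_add_one hstep hj₀ (j + 1)
    rw [← htail_i0, h, hc] at this
    exact Bool.false_ne_true this
  · refine .inl (eq_chainAssignment_of_forall_comp_tailVar fun j => ?_)
    refine (htail j).resolve_right fun h => ?_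
    exact hsome ⟨j + 1, by rw [← htail_i0, h, hb]⟩

theorem sat_gapGadget_iff (hg : IsGap R0 R1 c b) (hc : c i0 = false) (hb : b i0 = true)
    (σ : ChainVar k i0 → Bool) :
    (gapGadget R0 R1 k i0 c b).sat σ ↔ σ = chainAssignment k i0 c ∨ σ = chainAssignment k i0 b := by
  refine ⟨eq_chainAssignment_of_sat_gapGadget hg hc hb, ?_⟩
  rw [gapGadget, CSPInstance.sat_append, sat_chainInstance, sat_pinInstance]
  rintro (rfl | rfl)
  · refine ⟨fun j => ?_, fun _ _ => rfl⟩
    rw [sat_chainConstraint, chainAssignment_comp_tailVar]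
    exact .inl ⟨hc, hg.left_mem⟩
  · refine ⟨fun j => ?_, ?_⟩
    · rw [sat_chainConstraint, chainAssignment_comp_tailVar]
      exact .inr ⟨hb, hg.right_mem⟩
    · simp only [mem_map, mem_filter, mem_univ, true_and]
      rintro _ ⟨p, hp, rfl⟩
      exact hp.symm

end Gadget

/-- If `R₁` is monotone and non-empty and `R₀ ⊄ R₁`, then `R₀ + R₁` 3-simulates equality. -/
theorem relSum_simulates_equality_of_not_subset (r : ℕ) (R0 R1 : BoolRel r)
    (hmono : MonotoneRel R1) (hne : R1.Nonempty) (hnsub : ¬ R0 ⊆ R1) :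
    relSimulatesEq (relSum R0 R1) 3 := by
  obtain ⟨c, b, hg⟩ := exists_isGap hmono hne hnsub
  obtain ⟨i0, hc, hb⟩ := hg.exists_lt
  intro k hk
  have : NeZero k := ⟨by omega⟩
  exact simulatesEqK_of_sat_iff (gapGadget R0 R1 k i0 c b) (over_gapGadget R0 R1 k i0 c b)
    (fun v => (varDegree_gapGadget_le R0 R1 k i0 c b v).trans (by norm_num))
    (fun j => varDegree_gapGadget_le R0 R1 k i0 c b _) (fun _ => hc) (fun _ => hb)
    (sat_gapGadget_iff hg hc hb)
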